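/- arXiv:2006.02248 — 2 statements merged into one kernel-verified Lean document; each statement's English description precedes it below -/
import Mathlib

section
/- Let A be a g-tuple of d×d real symmetric matrices and X ∈ D_A(n). Suppose β ∈ M_{n×1}(ℝ)^g satisfies ker L_A(X) ⊆ ker Λ_A(β^T). Then taking γ = 0, there exists a real number c > 0 such that the dilation Y with blocks Y_i = [[X_i, cβ_i],[cβ_i^T, 0]] satisfies L_A(Y) ⪰ 0; in particular, if β ≠ 0 then X is not an Arveson extreme point of D_A. -/
open Matrix
open scoped Kronecker

/-- The monic linear pencil `L_A(X) = I - Σ_i A_i ⊗ X_i`. -/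
noncomputable def LA {g : ℕ} {D m : Type*} [Fintype D] [Fintype m] [DecidableEq D] [DecidableEq m]
    (A : Fin g → Matrix D D ℝ) (X : Fin g → Matrix m m ℝ) :
    Matrix (D × m) (D × m) ℝ :=
  1 - ∑ i, A i ⊗ₖ X i

/-- Membership of the symmetric tuple `X` in the free spectrahedron `D_A`. -/
def InDA {g : ℕ} {D m : Type*} [Fintype D] [Fintype m] [DecidableEq D] [DecidableEq m]
    (A : Fin g → Matrix D D ℝ) (X : Fin g → Matrix m m ℝ) : Prop :=
  (∀ i, (X i).IsSymm) ∧ (LA A X).PosSemidef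

/-- `X` is an Arveson extreme point of `D_A`: every dilation `[[X,β],[βᵀ,γ]] ∈ D_A`
forces `β = 0`. -/
def IsArvExt {g d n : ℕ} (A : Fin g → Matrix (Fin d) (Fin d) ℝ)
    (X : Fin g → Matrix (Fin n) (Fin n) ℝ) : Prop :=
  InDA A X ∧ ∀ (k : ℕ) (β : Fin g → Matrix (Fin n) (Fin k) ℝ)
    (γ : Fin g → Matrix (Fin k) (Fin k) ℝ),
      InDA A (fun i => Matrix.fromBlocks (X i) (β i) (β i)ᵀ (γ i)) → β = 0

/-!
Factor `L_A(X) = Rᵀ R`. Since `ker R ⊆ ker L_A(X) ⊆ ker Λ` with `Λ = Λ_A(βᵀ)`, we can write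
`Λ = M R`, and Cauchy–Schwarz gives `|Λ x|² ≤ s |R x|² = s ⟪x, L_A(X) x⟫` with `s = Σ M_ij²`;
hence `L_A(X) - c² ΛᵀΛ ⪰ 0` for small `c > 0`. After regrouping the tensor factors, `L_A(Y)` is the
block matrix `[[L_A(X), -c Λᵀ], [-c Λ, I]]`, whose Schur complement is exactly `L_A(X) - c² ΛᵀΛ`.
-/

open scoped MatrixOrder

theorem LinearMap.exists_comp_eq_of_ker_le {K V W U : Type*} [Field K] [AddCommGroup V]
    [Module K V] [AddCommGroup W] [Module K W] [AddCommGroup U] [Module K U]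
    (f : V →ₗ[K] W) (g : V →ₗ[K] U) (h : ker f ≤ ker g) :
    ∃ φ : W →ₗ[K] U, φ ∘ₗ f = g := by
  obtain ⟨φ, hφ⟩ := LinearMap.exists_extend
    ((ker f).liftQ g h ∘ₗ f.quotKerEquivRange.symm.toLinearMap)
  refine ⟨φ, LinearMap.ext fun v => ?_⟩
  have := LinearMap.congr_fun hφ ⟨f v, mem_range_self f v⟩
  simp only [coe_comp, LinearEquiv.coe_coe, Function.comp_apply, Submodule.subtype_apply] at this
  rw [comp_apply, this, quotKerEquivRange_symm_apply_image]
  rfl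

theorem Matrix.exists_mul_eq_of_ker_mulVecLin_le {K m n k : Type*} [Field K] [Fintype m]
    [Fintype n] (R : Matrix m n K) (Λ : Matrix k n K)
    (h : LinearMap.ker R.mulVecLin ≤ LinearMap.ker Λ.mulVecLin) :
    ∃ M : Matrix k m K, M * R = Λ := by
  classical
  obtain ⟨φ, hφ⟩ := LinearMap.exists_comp_eq_of_ker_le _ _ h
  refine ⟨LinearMap.toMatrix' φ, Matrix.toLin'.injective ?_⟩
  rw [Matrix.toLin'_mul, Matrix.toLin'_toMatrix', Matrix.toLin'_apply', Matrix.toLin'_apply', hφ]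

theorem Matrix.mulVec_dotProduct_mulVec_self_le {m n : Type*} [Fintype m] [Fintype n]
    (M : Matrix m n ℝ) (y : n → ℝ) :
    M *ᵥ y ⬝ᵥ M *ᵥ y ≤ (∑ i, ∑ j, M i j ^ 2) * (y ⬝ᵥ y) := by
  simp only [dotProduct, mulVec, ← sq]
  rw [Finset.sum_mul]
  exact Finset.sum_le_sum fun i _ => Finset.sum_mul_sq_le_sq_mul_sq _ _ _

theorem Matrix.PosSemidef.exists_eq_transpose_mul_self {n : Type*} [Fintype n] [DecidableEq n]
    {L : Matrix n n ℝ} (hL : L.PosSemidef) : ∃ R : Matrix n n ℝ, L = Rᵀ * R := by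
  refine ⟨CFC.sqrt L, ?_⟩
  rw [← conjTranspose_eq_transpose_of_trivial, (CFC.sqrt_nonneg L).posSemidef.isHermitian.eq,
    CFC.sqrt_mul_sqrt_self L hL.nonneg]

theorem Matrix.PosSemidef.exists_pos_sub_smul_transpose_mul_self {n k : Type*} [Fintype n]
    [DecidableEq n] [Fintype k] {L : Matrix n n ℝ} (hL : L.PosSemidef) (Λ : Matrix k n ℝ)
    (h : LinearMap.ker L.mulVecLin ≤ LinearMap.ker Λ.mulVecLin) :
    ∃ t : ℝ, 0 < t ∧ (L - t • (Λᵀ * Λ)).PosSemidef := by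
  obtain ⟨R, rfl⟩ := hL.exists_eq_transpose_mul_self
  obtain ⟨M, rfl⟩ : ∃ M : Matrix k n ℝ, M * R = Λ := by
    refine exists_mul_eq_of_ker_mulVecLin_le R Λ fun x hx => h ?_
    rw [LinearMap.mem_ker, mulVecLin_apply] at hx ⊢
    rw [← mulVec_mulVec, hx, mulVec_zero]
  set s := ∑ i, ∑ j, M i j ^ 2
  have hs : 0 ≤ s := by positivity
  refine ⟨(s + 1)⁻¹, by positivity, .of_dotProduct_mulVec_nonneg ?_ fun x => ?_⟩
  · have := (isHermitian_conjTranspose_mul_self (M * R)).smul (.all (s + 1)⁻¹)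
    exact hL.isHermitian.sub (by simpa using this)
  · have hquad : star x ⬝ᵥ (Rᵀ * R - (s + 1)⁻¹ • ((M * R)ᵀ * (M * R))) *ᵥ x =
        R *ᵥ x ⬝ᵥ R *ᵥ x - (s + 1)⁻¹ * (M *ᵥ (R *ᵥ x) ⬝ᵥ M *ᵥ (R *ᵥ x)) := by
      simp only [sub_mulVec, smul_mulVec, ← mulVec_mulVec, dotProduct_sub, dotProduct_smul,
        star_trivial, dotProduct_mulVec _ Rᵀ, dotProduct_mulVec _ (M * R)ᵀ, vecMul_transpose,
        smul_eq_mul]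
    have hM := M.mulVec_dotProduct_mulVec_self_le (R *ᵥ x)
    have hRx : 0 ≤ R *ᵥ x ⬝ᵥ R *ᵥ x := dotProduct_self_star_nonneg _
    rw [hquad, sub_nonneg, inv_mul_le_iff₀ (by positivity)]
    nlinarith

theorem LA_fromBlocks_submatrix {g : ℕ} {D m k : Type*} [Fintype D] [Fintype m] [Fintype k]
    [DecidableEq D] [DecidableEq m] [DecidableEq k] (A : Fin g → Matrix D D ℝ)
    (X : Fin g → Matrix m m ℝ) (B : Fin g → Matrix m k ℝ) (C : Fin g → Matrix k m ℝ)
    (Γ : Fin g → Matrix k k ℝ) :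
    (LA A fun i => fromBlocks (X i) (B i) (C i) (Γ i)).submatrix
        (Equiv.prodSumDistrib D m k).symm (Equiv.prodSumDistrib D m k).symm =
      fromBlocks (LA A X) (-∑ i, A i ⊗ₖ B i) (-∑ i, A i ⊗ₖ C i) (LA A Γ) := by
  ext (⟨a, p⟩ | ⟨a, p⟩) (⟨b, q⟩ | ⟨b, q⟩) <;>
    simp [LA, Matrix.sub_apply, Matrix.sum_apply, one_apply, Prod.ext_iff]

theorem Matrix.posSemidef_fromBlocks_transpose_one_iff {m k : Type*} [Fintype m] [Fintype k]
    [DecidableEq k] (L : Matrix m m ℝ) (B : Matrix k m ℝ) :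
    (fromBlocks L Bᵀ B 1).PosSemidef ↔ (L - Bᵀ * B).PosSemidef := by
  let _ : Invertible (1 : Matrix k k ℝ) := invertibleOne
  simpa [conjTranspose_eq_transpose_of_trivial] using PosDef.fromBlocks₂₂ L Bᵀ PosDef.one

theorem InDA.exists_pos_fromBlocks_smul_mem {g : ℕ} {D m k : Type*} [Fintype D] [Fintype m]
    [Fintype k] [DecidableEq D] [DecidableEq m] [DecidableEq k] {A : Fin g → Matrix D D ℝ}
    (hA : ∀ i, (A i).IsSymm) {X : Fin g → Matrix m m ℝ} (hX : InDA A X)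
    (β : Fin g → Matrix m k ℝ)
    (hker : LinearMap.ker (LA A X).mulVecLin ≤
      LinearMap.ker (∑ i, A i ⊗ₖ (β i)ᵀ).mulVecLin) :
    ∃ c : ℝ, 0 < c ∧ InDA A fun i => fromBlocks (X i) (c • β i) (c • β i)ᵀ 0 := by
  set Λ := ∑ i, A i ⊗ₖ (β i)ᵀ
  obtain ⟨t, ht, hpsd⟩ := hX.2.exists_pos_sub_smul_transpose_mul_self Λ hker
  refine ⟨√t, Real.sqrt_pos.2 ht, fun i => (hX.1 i).fromBlocks rfl isSymm_zero, ?_⟩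
  have hB : ∑ i, A i ⊗ₖ (√t • β i) = (√t • Λ)ᵀ := by
    simp [Λ, transpose_sum, ← kroneckerMap_transpose, (hA _).eq, Finset.smul_sum, kronecker_smul]
  have hC : ∑ i, A i ⊗ₖ (√t • β i)ᵀ = √t • Λ := by
    simp [Λ, Finset.smul_sum, kronecker_smul]
  have hΓ : LA A (fun _ => (0 : Matrix k k ℝ)) = 1 := by simp [LA]
  rw [← posSemidef_submatrix_equiv (Equiv.prodSumDistrib D m k).symm, LA_fromBlocks_submatrix,
    hB, hC, hΓ, ← transpose_neg, posSemidef_fromBlocks_transpose_one_iff]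
  convert hpsd using 2
  rw [transpose_neg, Matrix.neg_mul, Matrix.mul_neg, neg_neg, transpose_smul, Matrix.smul_mul,
    Matrix.mul_smul, smul_smul, Real.mul_self_sqrt ht.le]

/-- if `ker L_A(X) ⊆ ker Λ_A(βᵀ)` then, taking `γ = 0`, there is `c > 0`
with `[[X, cβ],[cβᵀ, 0]] ∈ D_A`; in particular if `β ≠ 0` then `X` is not Arveson extreme. -/
theorem kernel_containment_gives_dilation {g d n : ℕ}
    (A : Fin g → Matrix (Fin d) (Fin d) ℝ) (hA : ∀ i, (A i).IsSymm)
    (X : Fin g → Matrix (Fin n) (Fin n) ℝ) (hX : InDA A X)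
    (β : Fin g → Matrix (Fin n) (Fin 1) ℝ)
    (hker : LinearMap.ker (LA A X).mulVecLin ≤
      LinearMap.ker (∑ i, A i ⊗ₖ (β i)ᵀ).mulVecLin) :
    (∃ c : ℝ, 0 < c ∧
      InDA A (fun i => Matrix.fromBlocks (X i) (c • β i) (c • β i)ᵀ
        (0 : Matrix (Fin 1) (Fin 1) ℝ))) ∧
    (β ≠ 0 → ¬ IsArvExt A X) := by
  obtain ⟨c, hc, hY⟩ := hX.exists_pos_fromBlocks_smul_mem hA β hker
  refine ⟨⟨c, hc, hY⟩, fun hβ hArv => hβ ?_⟩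
  have hcβ : c • β = 0 := hArv.2 1 (c • β) 0 hY
  exact (smul_eq_zero.mp hcβ).resolve_left hc.ne'
end

section
/- Let D_A be a free spectrahedron defined by a tuple A of d×d real symmetric diagonal matrices (so D_A is a free polytope) and suppose X ∈ D_A(n) is an Arveson extreme point. Then gn ≤ k_{A,X}, where k_{A,X} = dim ker L_A(X). -/
open Matrix
open scoped Kronecker

lemma LinearMap.finrank_quotient_range_eq_finrank_ker {K V : Type*} [Field K] [AddCommGroup V]
    [Module K V] [FiniteDimensional K V] (f : V →ₗ[K] V) :
    Module.finrank K (V ⧸ LinearMap.range f) = Module.finrank K (LinearMap.ker f) := by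
  have := (LinearMap.range f).finrank_quotient_add_finrank
  have := f.finrank_range_add_finrank_ker
  omega

namespace Matrix

variable {m k : Type*} [Fintype m]

lemma PosSemidef.dotProduct_mulVec_sq_le {M : Matrix m m ℝ} (hM : M.PosSemidef) (x y : m → ℝ) :
    (x ⬝ᵥ M *ᵥ y) ^ 2 ≤ (x ⬝ᵥ M *ᵥ x) * (y ⬝ᵥ M *ᵥ y) := by
  classical
  have hsymm : LinearMap.IsSymm (toBilin' M) := LinearMap.BilinForm.isSymm_iff.mp <|
    isSymm_toBilin'_iff_isSymm.mpr (isHermitian_iff_isSymm.mp hM.1)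
  simpa only [toBilin'_apply'] using
    (toBilin' M).apply_sq_le_of_symm
      (fun z => by simpa [toBilin'_apply'] using hM.dotProduct_mulVec_nonneg z) hsymm x y

lemma PosSemidef.sub_mul_mul_conjTranspose [Fintype k] {M : Matrix m m ℝ} (hM : M.PosSemidef)
    {W : Matrix m k ℝ} (hW : (Wᴴ * M * W).trace ≤ 1) :
    (M - M * W * (M * W)ᴴ).PosSemidef := by
  refine .of_dotProduct_mulVec_nonneg (hM.1.sub (isHermitian_mul_conjTranspose_self _))
    fun u => ?_
  let w : k → m → ℝ := fun c a => W a c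
  have htrace : (Wᴴ * M * W).trace = ∑ c, w c ⬝ᵥ M *ᵥ w c := by
    simp [w, Matrix.mul_assoc, trace, mul_apply, dotProduct, mulVec]
  have hform : u ⬝ᵥ (M * W * (M * W)ᴴ) *ᵥ u = ∑ c, (w c ⬝ᵥ M *ᵥ u) ^ 2 := by
    rw [← mulVec_mulVec, dotProduct_mulVec, ← mulVec_transpose,
      ← conjTranspose_eq_transpose_of_trivial, conjTranspose_mul, hM.1.eq, ← mulVec_mulVec]
    simp [w, dotProduct, mulVec, sq]
  have hu : 0 ≤ u ⬝ᵥ M *ᵥ u := by simpa using hM.dotProduct_mulVec_nonneg u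
  rw [star_trivial, sub_mulVec, dotProduct_sub, sub_nonneg]
  calc u ⬝ᵥ (M * W * (M * W)ᴴ) *ᵥ u
      = ∑ c, (w c ⬝ᵥ M *ᵥ u) ^ 2 := hform
    _ ≤ ∑ c, (w c ⬝ᵥ M *ᵥ w c) * (u ⬝ᵥ M *ᵥ u) :=
      Finset.sum_le_sum fun c _ => hM.dotProduct_mulVec_sq_le _ _
    _ = (Wᴴ * M * W).trace * (u ⬝ᵥ M *ᵥ u) := by rw [htrace, Finset.sum_mul]
    _ ≤ u ⬝ᵥ M *ᵥ u := mul_le_of_le_one_left hu hW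

end Matrix

section Dilation

variable {g : ℕ} {D m k : Type*} [Fintype D] [Fintype m] [Fintype k] [DecidableEq D]
  [DecidableEq m] [DecidableEq k]

lemma LA_fromBlocks (A : Fin g → Matrix D D ℝ) (X : Fin g → Matrix m m ℝ)
    (B : Fin g → Matrix m k ℝ) (C : Fin g → Matrix k m ℝ) (Γ : Fin g → Matrix k k ℝ) :
    (LA A fun i => fromBlocks (X i) (B i) (C i) (Γ i)).submatrix
        (Equiv.prodSumDistrib D m k).symm (Equiv.prodSumDistrib D m k).symm
      = fromBlocks (LA A X) (-∑ i, A i ⊗ₖ B i) (-∑ i, A i ⊗ₖ C i) (LA A Γ) := by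
  ext (⟨j, a⟩ | ⟨j, a⟩) (⟨j', b⟩ | ⟨j', b⟩) <;>
    simp [LA, Matrix.sub_apply, Matrix.sum_apply, one_apply, Prod.ext_iff]

lemma InDA.fromBlocks_smul {A : Fin g → Matrix D D ℝ} (hA : ∀ i, (A i).IsSymm)
    {X : Fin g → Matrix m m ℝ} (hX : InDA A X) {β : Fin g → Matrix m k ℝ}
    {W : Matrix (D × m) (D × k) ℝ} (hW : ∑ i, A i ⊗ₖ β i = LA A X * W) {ε : ℝ}
    (hε : ε ^ 2 * (Wᴴ * LA A X * W).trace ≤ 1) :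
    InDA A fun i => fromBlocks (X i) (ε • β i) (ε • β i)ᵀ 0 := by
  refine ⟨fun i => (hX.1 i).fromBlocks rfl isSymm_zero, ?_⟩
  have hB : -∑ i, A i ⊗ₖ (ε • β i) = -(LA A X * (ε • W)) := by
    simp_rw [kronecker_smul, ← Finset.smul_sum, hW, Matrix.mul_smul]
  have hC : -∑ i, A i ⊗ₖ (ε • β i)ᵀ = (-(LA A X * (ε • W)))ᴴ := by
    rw [← hB, conjTranspose_neg, conjTranspose_sum]
    simp_rw [conjTranspose_kronecker, conjTranspose_eq_transpose_of_trivial, (hA _).eq]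
  have hΓ : LA A (fun _ => (0 : Matrix k k ℝ)) = 1 := by simp [LA]
  have : Invertible (1 : Matrix (D × k) (D × k) ℝ) := invertibleOne
  rw [← posSemidef_submatrix_equiv (Equiv.prodSumDistrib D m k).symm, LA_fromBlocks, hB, hC, hΓ,
    PosDef.fromBlocks₂₂ _ _ PosDef.one, inv_one, Matrix.mul_one, conjTranspose_neg,
    Matrix.neg_mul, Matrix.mul_neg, neg_neg]
  refine hX.2.sub_mul_mul_conjTranspose ?_
  convert hε using 1
  simp [Matrix.smul_mul, Matrix.mul_smul, smul_smul, sq]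

end Dilation

lemma IsArvExt.eq_zero_of_kronecker_sum_eq_mul {g d n k : ℕ}
    {A : Fin g → Matrix (Fin d) (Fin d) ℝ} (hA : ∀ i, (A i).IsSymm)
    {X : Fin g → Matrix (Fin n) (Fin n) ℝ} (hX : IsArvExt A X)
    {β : Fin g → Matrix (Fin n) (Fin k) ℝ} {W : Matrix (Fin d × Fin n) (Fin d × Fin k) ℝ}
    (hW : ∑ i, A i ⊗ₖ β i = LA A X * W) : β = 0 := by
  set t := (Wᴴ * LA A X * W).trace
  have ht : 0 ≤ t := (hX.1.2.conjTranspose_mul_mul_same W).trace_nonneg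
  have hε : ((1 + t)⁻¹) ^ 2 * t ≤ 1 := by
    rw [inv_pow, inv_mul_le_iff₀ (by positivity)]
    nlinarith
  have hεβ : (1 + t)⁻¹ • β = 0 := hX.2 k _ 0 (hX.1.fromBlocks_smul hA hW hε)
  exact (smul_eq_zero.mp hεβ).resolve_left (by positivity)

section BlockDiagonal

variable {R D m k : Type*}

def IsFstBlockDiag [Zero R] (M : Matrix (D × m) (D × k) R) : Prop :=
  ∀ ⦃j j'⦄, j ≠ j' → ∀ a b, M (j, a) (j', b) = 0

lemma IsFstBlockDiag.mulVec_apply [NonUnitalNonAssocSemiring R] [Fintype D] [Fintype k]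
    {M : Matrix (D × m) (D × k) R} (hM : IsFstBlockDiag M) (v : D × k → R) (j : D) (a : m) :
    (M *ᵥ v) (j, a) = ∑ b, M (j, a) (j, b) * v (j, b) := by
  rw [mulVec, dotProduct, Fintype.sum_prod_type, Finset.sum_eq_single j]
  · intro j' _ hj'
    exact Finset.sum_eq_zero fun b _ => by rw [hM (Ne.symm hj'), zero_mul]
  · simp

lemma IsFstBlockDiag.exists_eq_mul_of_mulVec_one_eq [Semiring R] [Fintype D] [Fintype m]
    [Fintype k] [DecidableEq D] [Unique k] {Λ : Matrix (D × m) (D × k) R}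
    {L : Matrix (D × m) (D × m) R} (hΛ : IsFstBlockDiag Λ) (hL : IsFstBlockDiag L)
    {w : D × m → R} (hw : Λ *ᵥ 1 = L *ᵥ w) : ∃ W, Λ = L * W := by
  refine ⟨of fun x y => if x.1 = y.1 then w x else 0, ?_⟩
  ext ⟨j', p⟩ ⟨j, c⟩
  change _ = (L *ᵥ fun x => if x.1 = j then w x else 0) (j', p)
  rw [hL.mulVec_apply]
  by_cases h : j' = j
  · subst h
    have hwjp := congrFun hw (j', p)
    rw [hΛ.mulVec_apply, hL.mulVec_apply, Fintype.sum_unique] at hwjp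
    simpa [Unique.eq_default c] using hwjp
  · simp [hΛ h, h]

variable {g : ℕ} {A : Fin g → Matrix D D ℝ}

lemma isFstBlockDiag_kronecker_sum (hA : ∀ i, (A i).IsDiag) (Y : Fin g → Matrix m k ℝ) :
    IsFstBlockDiag (∑ i, A i ⊗ₖ Y i) := by
  intro j j' h a b
  simp [Matrix.sum_apply, hA _ h]

lemma isFstBlockDiag_LA [Fintype D] [Fintype m] [DecidableEq D] [DecidableEq m]
    (hA : ∀ i, (A i).IsDiag) (X : Fin g → Matrix m m ℝ) : IsFstBlockDiag (LA A X) := by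
  intro j j' h a b
  rw [LA, Matrix.sub_apply, isFstBlockDiag_kronecker_sum hA X h, one_apply_ne (by simp [h])]
  simp

end BlockDiagonal

def kroneckerSumMulVecOne {g : ℕ} {D m k : Type*} [Fintype D] [Fintype k]
    (A : Fin g → Matrix D D ℝ) : (Fin g → Matrix m k ℝ) →ₗ[ℝ] (D × m → ℝ) where
  toFun β := (∑ i, A i ⊗ₖ β i) *ᵥ 1
  map_add' β γ := by simp [kronecker_add, Finset.sum_add_distrib, add_mulVec]
  map_smul' c β := by simp [kronecker_smul, ← Finset.smul_sum, smul_mulVec]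

/-- for a free polytope (defining tuple of diagonal matrices), an
Arveson extreme point `X ∈ D_A(n)` satisfies `gn ≤ dim ker L_A(X)`. -/
theorem free_polytope_arveson_kernel_count {g d n : ℕ}
    (A : Fin g → Matrix (Fin d) (Fin d) ℝ) (hA : ∀ i, (A i).IsDiag)
    (X : Fin g → Matrix (Fin n) (Fin n) ℝ) (hX : IsArvExt A X) :
    g * n ≤ Module.finrank ℝ (LinearMap.ker (LA A X).mulVecLin) := by
  set R := LinearMap.range (LA A X).mulVecLin
  have hinj :
      Function.Injective (R.mkQ ∘ₗ kroneckerSumMulVecOne A (m := Fin n) (k := Fin 1)) := by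
    refine (injective_iff_map_eq_zero _).mpr fun β hβ => ?_
    obtain ⟨w, hw⟩ : kroneckerSumMulVecOne A β ∈ R := (Submodule.Quotient.mk_eq_zero R).mp hβ
    obtain ⟨W, hW⟩ := (isFstBlockDiag_kronecker_sum hA β).exists_eq_mul_of_mulVec_one_eq
      (isFstBlockDiag_LA hA X) hw.symm
    exact hX.eq_zero_of_kronecker_sum_eq_mul (fun i => (hA i).isSymm) hW
  calc g * n = Module.finrank ℝ (Fin g → Matrix (Fin n) (Fin 1) ℝ) := by
        simp [Module.finrank_pi_fintype, Module.finrank_matrix]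
    _ ≤ Module.finrank ℝ (_ ⧸ R) := LinearMap.finrank_le_finrank_of_injective hinj
    _ = _ := (LA A X).mulVecLin.finrank_quotient_range_eq_finrank_ker
end
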